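/- Let f be a feasible flow over time in a single-sink network, let θ1 ≥ 0, let e ∈ E and let 0 ≤ λ ≤ F^Δ_e(θ1). Then the cumulative outflow from edge e between times θ1 and θ2 := θ1 + λ/ν_e + τ_e is at least λ, i.e. F⁻_e(θ2) − F⁻_e(θ1) ≥ λ. -/
import Mathlib


open MeasureTheory Set

noncomputable section

/-- A single-sink network: a finite directed graph with integer travel times and
capacities on the edges, a sink node, and network inflow rates at the nodes
supported in `[0, theta0]`. -/
structure Network where
  V : Type
  E : Type
  fintypeV : Fintype V
  decV : DecidableEq V
  fintypeE : Fintype E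
  decE : DecidableEq E
  src : E → V
  dst : E → V
  sink : V
  tau : E → ℕ
  nu : E → ℕ
  tau_pos : ∀ e, 1 ≤ tau e
  nu_pos : ∀ e, 1 ≤ nu e
  theta0 : ℝ
  theta0_nonneg : 0 ≤ theta0
  u : V → ℝ → ℝ
  u_nonneg : ∀ v θ, 0 ≤ u v θ
  u_sink : ∀ θ, u sink θ = 0
  u_integrable : ∀ v, MeasureTheory.Integrable (u v) MeasureTheory.volume
  u_support : ∀ v θ, θ ∉ Set.Icc 0 theta0 → u v θ = 0

attribute [instance] Network.fintypeV Network.decV Network.fintypeE Network.decE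

namespace Network

variable (N : Network)

/-- `N.IsWalkBetween v w p` : the list of edges `p` forms a walk from `v` to `w`. -/
def IsWalkBetween : N.V → N.V → List N.E → Prop
  | v, w, [] => v = w
  | v, w, e :: p => N.src e = v ∧ IsWalkBetween (N.dst e) w p

/-- A walk from `v` to the sink. -/
def IsWalk (v : N.V) (p : List N.E) : Prop := N.IsWalkBetween v N.sink p

/-- The sink is reachable from every node. -/
def Reachable : Prop := ∀ v : N.V, ∃ p, N.IsWalk v p

/-- The graph has no (nonempty) cycles. -/
def Acyclic : Prop := ∀ v p, N.IsWalkBetween v v p → p = []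

/-- Total travel time `τ(G)` of the network. -/
def tauSum : ℝ := ∑ e, (N.tau e : ℝ)

/-- Physical length of a path. -/
def pathTau (p : List N.E) : ℝ := (p.map fun e => (N.tau e : ℝ)).sum

/-- `τ(P_max)`: the maximum physical length of a simple path ending at the sink. -/
def tauPmax : ℝ :=
  sSup { x | ∃ v p, N.IsWalk v p ∧ (v :: p.map N.dst).Nodup ∧ x = N.pathTau p }

/-- Edges leaving `v`. -/
def outEdges (v : N.V) : Finset N.E := Finset.univ.filter fun e => N.src e = v

/-- Edges entering `v`. -/
def inEdges (v : N.V) : Finset N.E := Finset.univ.filter fun e => N.dst e = v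

/-- Cumulative network inflow `U_v(θ)`. -/
def cumInflow (v : N.V) (θ : ℝ) : ℝ := ∫ ζ in (0:ℝ)..θ, N.u v ζ

/-- Total inflow volume `U`. -/
def totalInflow : ℝ := ∑ v ∈ Finset.univ.erase N.sink, N.cumInflow v N.theta0

/-- `p` is a physically shortest `v`-`t` path. -/
def PhysShortest (v : N.V) (p : List N.E) : Prop :=
  N.IsWalk v p ∧ ∀ p', N.IsWalk v p' → N.pathTau p ≤ N.pathTau p'

/-- Physical distance from `v` to the sink. -/
def physDist (v : N.V) : ℝ := sInf { x | ∃ p, N.IsWalk v p ∧ x = N.pathTau p }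

/-- `E(T)`: edges with both endpoints in `T`. -/
def edgesIn (T : Finset N.V) : Finset N.E :=
  Finset.univ.filter fun e => N.src e ∈ T ∧ N.dst e ∈ T

/-- `δ⁻_T`: edges entering `T`. -/
def deltaMinus (T : Finset N.V) : Finset N.E :=
  Finset.univ.filter fun e => N.src e ∉ T ∧ N.dst e ∈ T

/-- `δ⁺_T`: edges leaving `T`. -/
def deltaPlus (T : Finset N.V) : Finset N.E :=
  Finset.univ.filter fun e => N.src e ∈ T ∧ N.dst e ∉ T

/-- A flow over time: nonnegative, locally integrable edge in- and outflow rates,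
vanishing for negative times. -/
structure Flow (N : Network) where
  fp : N.E → ℝ → ℝ
  fm : N.E → ℝ → ℝ
  fp_nonneg : ∀ e θ, 0 ≤ fp e θ
  fm_nonneg : ∀ e θ, 0 ≤ fm e θ
  fp_zero : ∀ e θ, θ < 0 → fp e θ = 0
  fp_locInt : ∀ e, MeasureTheory.LocallyIntegrable (fp e) MeasureTheory.volume
  fm_locInt : ∀ e, MeasureTheory.LocallyIntegrable (fm e) MeasureTheory.volume

namespace Flow

variable {N : Network} (f : N.Flow)

/-- Cumulative edge inflow `F⁺_e`. -/
def Fp (e : N.E) (θ : ℝ) : ℝ := ∫ ζ in (0:ℝ)..θ, f.fp e ζ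

/-- Cumulative edge outflow `F⁻_e`. -/
def Fm (e : N.E) (θ : ℝ) : ℝ := ∫ ζ in (0:ℝ)..θ, f.fm e ζ

/-- Queue length `q_e(θ) = F⁺_e(θ) - F⁻_e(θ + τ_e)`. -/
def queue (e : N.E) (θ : ℝ) : ℝ := f.Fp e θ - f.Fm e (θ + (N.tau e : ℝ))

/-- Edge load `F^Δ_e(θ) = F⁺_e(θ) - F⁻_e(θ)`. -/
def load (e : N.E) (θ : ℝ) : ℝ := f.Fp e θ - f.Fm e θ

/-- Total flow volume in the network `F^Δ(θ)`. -/
def totalLoad (θ : ℝ) : ℝ := ∑ e, f.load e θ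

/-- Flow volume having reached the sink, `Z(θ)`. -/
def Z (θ : ℝ) : ℝ :=
  ∑ e ∈ N.inEdges N.sink, f.Fm e θ - ∑ e ∈ N.outEdges N.sink, f.Fp e θ

/-- Instantaneous travel time `c_e(θ) = τ_e + q_e(θ)/ν_e`. -/
def c (e : N.E) (θ : ℝ) : ℝ := (N.tau e : ℝ) + f.queue e θ / (N.nu e : ℝ)

/-- Node label `ℓ_v(θ)`: instantaneous distance from `v` to the sink. -/
def label (v : N.V) (θ : ℝ) : ℝ :=
  sInf { x | ∃ p, N.IsWalk v p ∧ x = (p.map fun e => f.c e θ).sum }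

/-- Edge `e` is active at time `θ`. -/
def Active (e : N.E) (θ : ℝ) : Prop :=
  f.label (N.src e) θ = f.label (N.dst e) θ + f.c e θ

/-- `p` is an active `v`-`t` path at time `θ`. -/
def ActivePath (v : N.V) (p : List N.E) (θ : ℝ) : Prop :=
  N.IsWalk v p ∧ ∀ e ∈ p, f.Active e θ

/-- Feasibility of a flow over time: flow conservation at non-sink nodes,
nonpositive excess at the sink, no outflow before `τ_e`, and queues operating
at capacity. -/
def Feasible : Prop :=
  (∀ v, v ≠ N.sink → ∀ᵐ θ ∂(volume : Measure ℝ), 0 ≤ θ →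
      (∑ e ∈ N.outEdges v, f.fp e θ) - ∑ e ∈ N.inEdges v, f.fm e θ = N.u v θ) ∧
  (∀ᵐ θ ∂(volume : Measure ℝ), 0 ≤ θ →
      (∑ e ∈ N.outEdges N.sink, f.fp e θ) - ∑ e ∈ N.inEdges N.sink, f.fm e θ ≤ 0) ∧
  (∀ e θ, θ < (N.tau e : ℝ) → f.fm e θ = 0) ∧
  (∀ e, ∀ᵐ θ ∂(volume : Measure ℝ), 0 ≤ θ →
      (0 < f.queue e θ → f.fm e (θ + (N.tau e : ℝ)) = (N.nu e : ℝ)) ∧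
      (f.queue e θ ≤ 0 → f.fm e (θ + (N.tau e : ℝ)) = min (f.fp e θ) (N.nu e : ℝ)))

/-- Instantaneous dynamic equilibrium: a feasible flow only using active edges. -/
def IsIDE : Prop :=
  f.Feasible ∧ ∀ e, ∀ᵐ θ ∂(volume : Measure ℝ), 0 ≤ θ → 0 < f.fp e θ → f.Active e θ

/-- The flow terminates. -/
def Terminates : Prop := ∃ θ, N.theta0 ≤ θ ∧ f.totalLoad θ = 0

/-- Makespan `Θ(f)`. -/
def makespan : ℝ := sInf { θ | N.theta0 ≤ θ ∧ f.totalLoad θ = 0 }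

/-- Total travel time `Ψ(f)`. -/
def totalTravelTime : ℝ := ∑ e, ∫ θ in Set.Ici (0:ℝ), f.c e θ * f.fp e θ

/-- The induced subgraph on `T` is sink-like on `[θ1, θ2]`. -/
def SinkLike (T : Finset N.V) (θ1 θ2 : ℝ) : Prop :=
  N.sink ∈ T ∧
  (∀ v ∈ T, ∀ p, N.PhysShortest v p → ∀ e ∈ p, N.src e ∈ T ∧ N.dst e ∈ T) ∧
  (∑ e ∈ N.edgesIn T, f.load e θ1) +
    (∑ e ∈ N.deltaMinus T, (f.Fm e θ2 - f.Fm e θ1)) +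
    (∑ v ∈ T.erase N.sink, ∫ θ in θ1..θ2, N.u v θ) < 1/2

lemma Fm_sub (e : N.E) (a b : ℝ) :
    f.Fm e b - f.Fm e a = ∫ θ in a..b, f.fm e θ := by
  have hint : ∀ x y : ℝ, IntervalIntegrable (f.fm e) volume x y := fun x y =>
    intervalIntegrable_iff.2
      (((f.fm_locInt e).integrableOn_isCompact isCompact_uIcc).mono_set
        Set.uIoc_subset_uIcc)
  have h1 := hint 0 a
  have h2 := hint a b
  rw [Fm, Fm, ← intervalIntegral.integral_add_adjacent_intervals h1 h2]
  ring

lemma Fm_mono (e : N.E) {a b : ℝ} (hab : a ≤ b) : f.Fm e a ≤ f.Fm e b := by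
  have h := f.Fm_sub e a b
  have h2 : 0 ≤ ∫ θ in a..b, f.fm e θ :=
    intervalIntegral.integral_nonneg hab fun θ _ => f.fm_nonneg e θ
  linarith

lemma Fp_sub (e : N.E) (a b : ℝ) :
    f.Fp e b - f.Fp e a = ∫ θ in a..b, f.fp e θ := by
  have hint : ∀ x y : ℝ, IntervalIntegrable (f.fp e) volume x y := fun x y =>
    intervalIntegrable_iff.2
      (((f.fp_locInt e).integrableOn_isCompact isCompact_uIcc).mono_set
        Set.uIoc_subset_uIcc)
  have h1 := hint 0 a
  have h2 := hint a b
  rw [Fp, Fp, ← intervalIntegral.integral_add_adjacent_intervals h1 h2]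
  ring

lemma Fp_mono (e : N.E) {a b : ℝ} (hab : a ≤ b) : f.Fp e a ≤ f.Fp e b := by
  have h := f.Fp_sub e a b
  have h2 : 0 ≤ ∫ θ in a..b, f.fp e θ :=
    intervalIntegral.integral_nonneg hab fun θ _ => f.fp_nonneg e θ
  linarith

end Flow

end Network

/-- any flow volume `λ ≤ F^Δ_e(θ1)` residing on an edge `e`
leaves it within time `λ/ν_e + τ_e`. -/
theorem flow_on_edges_leaves_fast (N : Network) (hreach : N.Reachable)
    (f : N.Flow) (hf : f.Feasible) (e : N.E) (θ1 lam : ℝ) (hθ1 : 0 ≤ θ1)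
    (hlam0 : 0 ≤ lam) (hlam : lam ≤ f.load e θ1) :
    lam ≤ f.Fm e (θ1 + lam / (N.nu e : ℝ) + (N.tau e : ℝ)) - f.Fm e θ1 := by
  set τ := (N.tau e : ℝ) with hτdef
  set ν := (N.nu e : ℝ) with hνdef
  have hν : 0 < ν := by
    have := N.nu_pos e
    simp only [hνdef]
    exact_mod_cast Nat.lt_of_lt_of_le Nat.zero_lt_one this
  have hτ : 0 ≤ τ := Nat.cast_nonneg _
  have hdiv : 0 ≤ lam / ν := div_nonneg hlam0 hν.le
  set b := θ1 + lam / ν with hb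
  have hab : θ1 ≤ b := by rw [hb]; linarith
  by_contra hcon
  push_neg at hcon
  -- hcon : f.Fm e (b + τ) - f.Fm e θ1 < lam  (note θ1 + lam/ν + τ = b + τ)
  have hload : lam ≤ f.Fp e θ1 - f.Fm e θ1 := hlam
  have hq : ∀ θ ∈ Set.Icc θ1 b, 0 < f.queue e θ := by
    intro θ hθ
    have h1 : f.Fp e θ1 ≤ f.Fp e θ := f.Fp_mono e hθ.1
    have h2 : f.Fm e (θ + τ) ≤ f.Fm e (b + τ) := f.Fm_mono e (by linarith [hθ.2])
    have h3 : f.Fm e (b + τ) - f.Fm e θ1 < lam := hcon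
    simp only [Network.Flow.queue]
    linarith
  have hae : ∀ᵐ θ ∂(volume : Measure ℝ), θ ∈ Set.uIoc θ1 b →
      f.fm e (θ + τ) = ν := by
    filter_upwards [hf.2.2.2 e] with θ h hθ
    rw [Set.uIoc_of_le hab] at hθ
    exact (h (le_trans hθ1 hθ.1.le)).1 (hq θ ⟨hθ.1.le, hθ.2⟩)
  have hcongr : ∫ θ in θ1..b, f.fm e (θ + τ) = ∫ θ in θ1..b, (ν : ℝ) :=
    intervalIntegral.integral_congr_ae hae
  have hkey : f.Fm e (b + τ) - f.Fm e (θ1 + τ) = lam := by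
    rw [f.Fm_sub e (θ1 + τ) (b + τ),
      ← intervalIntegral.integral_comp_add_right (f.fm e) τ, hcongr,
      intervalIntegral.integral_const, smul_eq_mul, hb]
    have : θ1 + lam / ν - θ1 = lam / ν := by ring
    rw [this, div_mul_cancel₀ _ hν.ne']
  have hmono : f.Fm e θ1 ≤ f.Fm e (θ1 + τ) := f.Fm_mono e (by linarith)
  linarith

end
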